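/- For (r, r′) ∈ ℂ², one has t¹(r, r′)(p, q₁, q₂) = 0 for all p, q₁, q₂ ∈ ℕ if and only if (r, r′) ∈ L. -/

import Mathlib

/-!
The sum defining `t¹(r, r')(p, q₁, q₂)` collapses to a single term when `p = q₁ + q₂`, namely
`((r'+n-1)/2)_{q₁} ((r'+n-1)/2)_{q₂} / (Γ((r+n)/2+q₁) Γ((r+n)/2+q₂))`. At `(0,0,0)` this forces
`(r+n)/2 = -i`, and then at `(2i+2, i+1, i+1)` the Gamma factors equal `1`, forcing
`((r'+n-1)/2)_{i+1} = 0`, i.e. `(r'+n-1)/2 = -j` with `j ≤ i`. Conversely, for `(r, r') ∈ L`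
every summand vanishes: either `q₁ > j` kills `(-j)_{q₁}`, or `q₁ + k ≤ i` puts
`(r+n)/2 + q₁ + k` at a pole of `Γ`, or else `k > i - j` kills `((r-r'+1)/2)_k = (-(i-j))_k`.
-/

noncomputable section

/-- A diagonal family for `(r, r')` (case of unitary groups, ρ = n, ρ' = n−1). -/
def IsDiagFam (n : ℕ) (r r' : ℂ) (s : ℕ → ℕ → ℂ) : Prop :=
  ∀ q₁ q₂ : ℕ,
    (r' + 2*(q₁ : ℂ) + (n : ℂ) - 1) * s q₁ q₂ = (r + 2*(q₁ : ℂ) + (n : ℂ)) * s (q₁ + 1) q₂ ∧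
    (r' + 2*(q₂ : ℂ) + (n : ℂ) - 1) * s q₁ q₂ = (r + 2*(q₂ : ℂ) + (n : ℂ)) * s q₁ (q₂ + 1)

/-- L = {(−ρ−2i, −ρ′−2j) : i, j ∈ ℕ, j ≤ i}, with ρ = n, ρ' = n−1. -/
def LC (n : ℕ) : Set (ℂ × ℂ) :=
  {p | ∃ i j : ℕ, j ≤ i ∧ p.1 = -(n : ℂ) - 2*(i : ℂ) ∧ p.2 = -((n : ℂ) - 1) - 2*(j : ℂ)}

/-- An admissible solution `t : ℕ³ → ℂ` for `(r, r')` in the unitary case: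
`t(p,q₁,q₂) = 0` unless `q₁+q₂ ≤ p` and `p−q₁−q₂` is even (equivalently `p+q₁+q₂` even),
and the relations (C1)–(C4) hold for all `(p,q₁,q₂)` with `q₁+q₂ ≤ p` and `p−q₁−q₂` even.
The natural-subtraction index `p − 1` is harmless: in (C1), (C3) its coefficient
`(p−q₁−q₂)/2` vanishes when `p = q₁+q₂`, and in (C2), (C4) we have `p ≥ q₁+q₂ ≥ 1`. -/
def IsAdmissibleC (n : ℕ) (r r' : ℂ) (t : ℕ → ℕ → ℕ → ℂ) : Prop :=
  (∀ p q₁ q₂ : ℕ, (p < q₁ + q₂ ∨ Odd (p + q₁ + q₂)) → t p q₁ q₂ = 0) ∧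
  (∀ p q₁ q₂ : ℕ, q₁ + q₂ ≤ p → Even (p + q₁ + q₂) →
    (((p : ℂ) + (n : ℂ) - 1) * (r' + 2*(q₁ : ℂ) + (n : ℂ) - 1) * t p q₁ q₂
      = (((p : ℂ) + (q₁ : ℂ) + (q₂ : ℂ))/2 + (n : ℂ) - 1)
          * (r + (p : ℂ) + (q₁ : ℂ) - (q₂ : ℂ) + (n : ℂ)) * t (p + 1) (q₁ + 1) q₂
        + (((p : ℂ) - (q₁ : ℂ) - (q₂ : ℂ))/2)
          * (r - (p : ℂ) + (q₁ : ℂ) - (q₂ : ℂ) - (n : ℂ) + 2) * t (p - 1) (q₁ + 1) q₂) ∧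
    (1 ≤ q₁ →
      ((p : ℂ) + (n : ℂ) - 1) * (r' - 2*(q₁ : ℂ) - (n : ℂ) + 3) * t p q₁ q₂
      = (((p : ℂ) + (q₁ : ℂ) + (q₂ : ℂ))/2 + (n : ℂ) - 2)
          * (r - (p : ℂ) - (q₁ : ℂ) + (q₂ : ℂ) - (n : ℂ) + 2) * t (p - 1) (q₁ - 1) q₂
        + (((p : ℂ) - (q₁ : ℂ) - (q₂ : ℂ))/2 + 1)
          * (r + (p : ℂ) - (q₁ : ℂ) + (q₂ : ℂ) + (n : ℂ)) * t (p + 1) (q₁ - 1) q₂) ∧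
    (((p : ℂ) + (n : ℂ) - 1) * (r' + 2*(q₂ : ℂ) + (n : ℂ) - 1) * t p q₁ q₂
      = (((p : ℂ) + (q₁ : ℂ) + (q₂ : ℂ))/2 + (n : ℂ) - 1)
          * (r + (p : ℂ) - (q₁ : ℂ) + (q₂ : ℂ) + (n : ℂ)) * t (p + 1) q₁ (q₂ + 1)
        + (((p : ℂ) - (q₁ : ℂ) - (q₂ : ℂ))/2)
          * (r - (p : ℂ) - (q₁ : ℂ) + (q₂ : ℂ) - (n : ℂ) + 2) * t (p - 1) q₁ (q₂ + 1)) ∧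
    (1 ≤ q₂ →
      ((p : ℂ) + (n : ℂ) - 1) * (r' - 2*(q₂ : ℂ) - (n : ℂ) + 3) * t p q₁ q₂
      = (((p : ℂ) + (q₁ : ℂ) + (q₂ : ℂ))/2 + (n : ℂ) - 2)
          * (r - (p : ℂ) + (q₁ : ℂ) - (q₂ : ℂ) - (n : ℂ) + 2) * t (p - 1) q₁ (q₂ - 1)
        + (((p : ℂ) - (q₁ : ℂ) - (q₂ : ℂ))/2 + 1)
          * (r + (p : ℂ) + (q₁ : ℂ) - (q₂ : ℂ) + (n : ℂ)) * t (p + 1) q₁ (q₂ - 1)))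

/-- The spectral function `t¹(r,r')` of the unitary case (Proposition 5.9):
`t¹(r,r')(p,q₁,q₂) = Σ_{k=0}^{(p−q₁−q₂)/2} 2^k (−(p−q₁−q₂)/2)_k ((p+q₁+q₂)/2+n−1)_k
((r'+n−1)/2)_{q₁} ((r'+n−1)/2)_{q₂} ((r−r'+1)/2)_k ((r+r'+1)/2)_k / (k!)²
· (1/Γ((r+n)/2+q₁+k)) · (1/Γ((r+n)/2+q₂+k))`
for `q₁+q₂ ≤ p` with `p−q₁−q₂` even, and `0` otherwise. -/
def t1C (n : ℕ) (r r' : ℂ) (p q₁ q₂ : ℕ) : ℂ :=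
  if p < q₁ + q₂ ∨ Odd (p + q₁ + q₂) then 0
  else ∑ k ∈ Finset.range ((p - q₁ - q₂) / 2 + 1),
    (2 : ℂ)^k * (ascPochhammer ℂ k).eval (-(((p : ℂ) - (q₁ : ℂ) - (q₂ : ℂ))/2)) *
      (ascPochhammer ℂ k).eval (((p : ℂ) + (q₁ : ℂ) + (q₂ : ℂ))/2 + (n : ℂ) - 1) *
      (ascPochhammer ℂ q₁).eval ((r' + (n : ℂ) - 1)/2) *
      (ascPochhammer ℂ q₂).eval ((r' + (n : ℂ) - 1)/2) *
      (ascPochhammer ℂ k).eval ((r - r' + 1)/2) *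
      (ascPochhammer ℂ k).eval ((r + r' + 1)/2) / ((k.factorial : ℂ))^2 *
      (Complex.Gamma ((r + (n : ℂ))/2 + (q₁ : ℂ) + (k : ℂ)))⁻¹ *
      (Complex.Gamma ((r + (n : ℂ))/2 + (q₂ : ℂ) + (k : ℂ)))⁻¹

lemma t1C_add_self (n : ℕ) (r r' : ℂ) (q₁ q₂ : ℕ) :
    t1C n r r' (q₁ + q₂) q₁ q₂ =
      (ascPochhammer ℂ q₁).eval ((r' + n - 1) / 2) * (ascPochhammer ℂ q₂).eval ((r' + n - 1) / 2) *
        (Complex.Gamma ((r + n) / 2 + q₁))⁻¹ * (Complex.Gamma ((r + n) / 2 + q₂))⁻¹ := by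
  have hcond : ¬(q₁ + q₂ < q₁ + q₂ ∨ Odd (q₁ + q₂ + q₁ + q₂)) := by
    rw [not_or, Nat.not_odd_iff_even]
    exact ⟨lt_irrefl _, ⟨q₁ + q₂, by ring⟩⟩
  rw [t1C, if_neg hcond, show q₁ + q₂ - q₁ - q₂ = 0 by omega, Finset.sum_range_one]
  simp

lemma ascPochhammer_or_inv_Gamma_eq_zero {i j : ℕ} (hji : j ≤ i) (q k : ℕ) :
    (ascPochhammer ℂ q).eval (-(j : ℂ)) = 0 ∨
      (Complex.Gamma (-(i : ℂ) + q + k))⁻¹ = 0 ∨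
      (ascPochhammer ℂ k).eval (-((i - j : ℕ) : ℂ)) = 0 := by
  rcases lt_or_ge j q with hjq | hqj
  · exact Or.inl (ascPochhammer_eval_neg_coe_nat_of_lt hjq)
  rcases le_or_gt (q + k) i with hqki | hiqk
  · refine Or.inr (Or.inl (inv_eq_zero.mpr ((Complex.Gamma_eq_zero_iff _).mpr ⟨i - q - k, ?_⟩)))
    rw [Nat.sub_sub, Nat.cast_sub hqki]
    push_cast
    ring
  · exact Or.inr (Or.inr (ascPochhammer_eval_neg_coe_nat_of_lt (by omega)))

lemma mem_LC_of_forall_t1C_eq_zero {n : ℕ} {r r' : ℂ}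
    (h : ∀ p q₁ q₂ : ℕ, t1C n r r' p q₁ q₂ = 0) : (r, r') ∈ LC n := by
  obtain ⟨i, hi⟩ : ∃ i : ℕ, (r + n) / 2 = -i := by
    have h₀ := t1C_add_self n r r' 0 0
    rw [h] at h₀
    simpa [eq_comm (a := (0 : ℂ)), ← Complex.Gamma_eq_zero_iff] using h₀
  have hΓ : (r + n) / 2 + ((i + 1 : ℕ) : ℂ) = 1 := by
    rw [hi]
    push_cast
    ring
  have hdiag := t1C_add_self n r r' (i + 1) (i + 1)
  rw [h, hΓ, Complex.Gamma_one, inv_one, mul_one, mul_one, eq_comm,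
    mul_self_eq_zero, ascPochhammer_eval_eq_zero_iff] at hdiag
  obtain ⟨j, hj, hj'⟩ := hdiag
  exact ⟨i, j, Nat.lt_succ_iff.mp hj, by linear_combination 2 * hi, by linear_combination 2 * hj'⟩

lemma t1C_eq_zero_of_mem_LC {n : ℕ} {r r' : ℂ} (hL : (r, r') ∈ LC n) (p q₁ q₂ : ℕ) :
    t1C n r r' p q₁ q₂ = 0 := by
  obtain ⟨i, j, hji, hr, hr'⟩ : ∃ i j : ℕ, j ≤ i ∧ r = -n - 2 * i ∧ r' = -(n - 1) - 2 * j := hL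
  have hΓ : (r + n) / 2 = -i := by
    rw [hr]
    ring
  have hq : (r' + n - 1) / 2 = -j := by
    rw [hr']
    ring
  have hk : (r - r' + 1) / 2 = -((i - j : ℕ) : ℂ) := by
    rw [hr, hr', Nat.cast_sub hji]
    ring
  rw [t1C]
  split_ifs
  · rfl
  refine Finset.sum_eq_zero fun k _ => ?_
  rw [hΓ, hq, hk]
  rcases ascPochhammer_or_inv_Gamma_eq_zero hji q₁ k with h | h | h <;> simp [h]

theorem statement19_general (n : ℕ) (r r' : ℂ) :
    (∀ p q₁ q₂ : ℕ, t1C n r r' p q₁ q₂ = 0) ↔ (r, r') ∈ LC n :=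
  ⟨mem_LC_of_forall_t1C_eq_zero, t1C_eq_zero_of_mem_LC⟩

theorem statement19 (n : ℕ) (hn : 2 ≤ n) (r r' : ℂ) :
    (∀ p q₁ q₂ : ℕ, t1C n r r' p q₁ q₂ = 0) ↔ (r, r') ∈ LC n :=
  statement19_general n r r'

end
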